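/- arXiv:1908.08627 — 8 statements merged into one kernel-verified Lean document; each statement's English description precedes it below -/
import Mathlib

section
/- Let G be a topological group. Then G is simply sm-factorizable if and only if for each continuous function f : G → ℝ one can find a topological group H, a continuous surjective homomorphism π : G → H onto a strongly submetrizable topological group H, and a continuous function g : H → ℝ such that f = g ∘ π. -/
open Topology TopologicalSpace Pointwise Function Set

def IsCozero {X : Type*} [TopologicalSpace X] (U : Set X) : Prop :=
  ∃ f : X → ℝ, Continuous f ∧ U = f ⁻¹' {x : ℝ | x ≠ 0}

/-- A topological group is simply sm-factorizable if every cozero set is saturated with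
respect to some continuous surjective homomorphism onto a separable metrizable topological group. -/
def SimplySMFactorizable (G : Type*) [Group G] [TopologicalSpace G] : Prop :=
  ∀ U : Set G, IsCozero U →
    ∃ (H : Type) (gH : Group H) (tH : TopologicalSpace H),
      letI := gH
      letI := tH
      IsTopologicalGroup H ∧ SeparableSpace H ∧ MetrizableSpace H ∧
        ∃ π : G →* H, Continuous π ∧ Surjective π ∧ ⇑π ⁻¹' (⇑π '' U) = U

/-- A topological group is strongly submetrizable if it admits a continuous bijective
homomorphism onto a separable metrizable topological group. -/
def StronglySubmetrizable (H : Type*) [Group H] [TopologicalSpace H] : Prop :=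
  ∃ (K : Type) (gK : Group K) (tK : TopologicalSpace K),
    letI := gK
    letI := tK
    IsTopologicalGroup K ∧ SeparableSpace K ∧ MetrizableSpace K ∧
      ∃ i : H →* K, Continuous i ∧ Bijective i

/-!
Every continuous `f : G → ℝ` is determined by the countably many cozero sets `f⁻¹(r, s)`,
`r, s ∈ ℚ`. Saturating each of them by a homomorphism onto a separable metrizable group and
taking the product gives one continuous homomorphism `φ` into a separable metrizable group on whose
fibres `f` is constant. Then `f` factors through `G ⧸ ker φ` with its quotient topology, which
maps continuously and bijectively onto `φ.range`. Conversely, if `f` factors through `π : G → H`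
and `i : H → K` is a continuous bijection onto a separable metrizable group, every cozero set
`f⁻¹(ℝ \ {0})` is saturated with respect to `i ∘ π`.
-/

theorem isCozero_preimage_Ioo {X : Type*} [TopologicalSpace X] {f : X → ℝ}
    (hf : Continuous f) (a b : ℝ) : IsCozero (f ⁻¹' Ioo a b) := by
  refine ⟨fun x => max (f x - a) 0 * max (b - f x) 0, by fun_prop, ?_⟩
  ext x
  simp

theorem eq_of_forall_rat_Ioo {a b : ℝ} (h : ∀ r s : ℚ, a ∈ Ioo (r : ℝ) s → b ∈ Ioo (r : ℝ) s) :
    a = b := by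
  rcases lt_trichotomy a b with hab | hab | hab
  · obtain ⟨s, has, hsb⟩ := exists_rat_btwn hab
    obtain ⟨r, hra⟩ := exists_rat_lt a
    exact absurd (h r s ⟨hra, has⟩).2 hsb.not_gt
  · exact hab
  · obtain ⟨r, hbr, hra⟩ := exists_rat_btwn hab
    obtain ⟨s, has⟩ := exists_rat_gt a
    exact absurd (h r s ⟨hra, has⟩).1 hbr.not_gt

theorem preimage_image_preimage_of_factorsThrough {X Y Z : Type*} {f : X → Z} {ψ : X → Y}
    (h : FactorsThrough f ψ) (s : Set Z) : ψ ⁻¹' (ψ '' (f ⁻¹' s)) = f ⁻¹' s := by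
  refine (subset_preimage_image ψ _).antisymm' ?_
  rintro x ⟨y, hy, hyx⟩
  exact show f x ∈ s from h hyx ▸ hy

theorem secondCountableTopology_of_separableSpace (X : Type*) [TopologicalSpace X]
    [PseudoMetrizableSpace X] [SeparableSpace X] : SecondCountableTopology X := by
  let := pseudoMetrizableSpaceUniformity X
  have := pseudoMetrizableSpaceUniformity_countably_generated X
  exact UniformSpace.secondCountable_of_separable X

/-- `G ⧸ φ.ker`, realised on `φ.range` so that it lives in the universe of `K`; it is given the
quotient topology below. -/
def QuotientRange {G K : Type*} [Group G] [Group K] (φ : G →* K) : Type _ := φ.range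

namespace QuotientRange

section Algebra

variable {G K : Type*} [Group G] [Group K] (φ : G →* K)

instance : Group (QuotientRange φ) := inferInstanceAs (Group φ.range)

noncomputable def equiv : G ⧸ φ.ker ≃* QuotientRange φ := QuotientGroup.quotientKerEquivRange φ

def mk : G →* QuotientRange φ := φ.rangeRestrict

theorem surjective_mk : Surjective (mk φ) := φ.rangeRestrict_surjective

def toRange : QuotientRange φ →* φ.range := MonoidHom.id _

end Algebra

variable {G K : Type*} [Group G] [TopologicalSpace G] [Group K] (φ : G →* K)

noncomputable instance : TopologicalSpace (QuotientRange φ) := .induced (equiv φ).symm inferInstance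

instance [IsTopologicalGroup G] : IsTopologicalGroup (QuotientRange φ) :=
  IsInducing.topologicalGroup (equiv φ).symm ⟨rfl⟩

noncomputable def homeomorph : G ⧸ φ.ker ≃ₜ QuotientRange φ :=
  ((equiv φ).symm.toEquiv.toHomeomorphOfIsInducing ⟨rfl⟩).symm

theorem isQuotientMap_mk : IsQuotientMap (mk φ) :=
  (homeomorph φ).isQuotientMap.comp (QuotientGroup.isQuotientMap_mk φ.ker)

theorem continuous_toRange [TopologicalSpace K] {φ : G →* K} (hφ : Continuous φ) :
    Continuous (toRange φ) :=
  (isQuotientMap_mk φ).continuous_iff.mpr (hφ.subtype_mk _)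

theorem exists_continuous_eq_comp_mk {f : G → ℝ} (hf : Continuous f) (hfφ : FactorsThrough f φ) :
    ∃ g : QuotientRange φ → ℝ, Continuous g ∧ f = g ∘ mk φ := by
  have hf_mk : FactorsThrough f (mk φ) := fun _ _ h => hfφ (congrArg Subtype.val h)
  set g : QuotientRange φ → ℝ := extend (mk φ) f 0
  have hcomp : g ∘ mk φ = f := hf_mk.extend_comp _
  exact ⟨g, (isQuotientMap_mk φ).continuous_iff.mpr (hcomp ▸ hf), hcomp.symm⟩

end QuotientRange

theorem QuotientRange.stronglySubmetrizable {G : Type*} {K : Type} [Group G] [TopologicalSpace G]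
    [Group K] [TopologicalSpace K] [IsTopologicalGroup K] [SecondCountableTopology K]
    [MetrizableSpace K] {φ : G →* K} (hφ : Continuous φ) :
    StronglySubmetrizable (QuotientRange φ) :=
  have hφ_range : IsEmbedding ((↑) : φ.range → K) := IsEmbedding.subtypeVal
  have := hφ_range.secondCountableTopology
  have := hφ_range.metrizableSpace
  ⟨φ.range, _, _, inferInstance, inferInstance, inferInstance, toRange φ,
    continuous_toRange hφ, bijective_id⟩

theorem exists_stronglySubmetrizable_factorization {G : Type*} [Group G] [TopologicalSpace G]
    [IsTopologicalGroup G] {K : Type} [Group K] [TopologicalSpace K] [IsTopologicalGroup K]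
    [SecondCountableTopology K] [MetrizableSpace K] {φ : G →* K} (hφ : Continuous φ)
    {f : G → ℝ} (hf : Continuous f) (hfφ : FactorsThrough f φ) :
    ∃ (H : Type) (gH : Group H) (tH : TopologicalSpace H),
      letI := gH
      letI := tH
      IsTopologicalGroup H ∧ StronglySubmetrizable H ∧
        ∃ π : G →* H, Continuous π ∧ Surjective π ∧
          ∃ g : H → ℝ, Continuous g ∧ f = g ∘ π := by
  obtain ⟨g, hg, rfl⟩ := QuotientRange.exists_continuous_eq_comp_mk φ hf hfφ
  exact ⟨QuotientRange φ, _, _, inferInstance, QuotientRange.stronglySubmetrizable hφ,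
    QuotientRange.mk φ, (QuotientRange.isQuotientMap_mk φ).continuous,
    QuotientRange.surjective_mk φ, g, hg, rfl⟩

namespace SimplySMFactorizable

variable {G : Type*} [Group G] [TopologicalSpace G]

theorem exists_factorization [IsTopologicalGroup G] (hG : SimplySMFactorizable G) {f : G → ℝ}
    (hf : Continuous f) :
    ∃ (H : Type) (gH : Group H) (tH : TopologicalSpace H),
      letI := gH
      letI := tH
      IsTopologicalGroup H ∧ StronglySubmetrizable H ∧
        ∃ π : G →* H, Continuous π ∧ Surjective π ∧
          ∃ g : H → ℝ, Continuous g ∧ f = g ∘ π := by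
  choose H gH tH _ _ _ π hπ _ hsat using
    fun p : ℚ × ℚ => hG _ (isCozero_preimage_Ioo hf p.1 p.2)
  have := fun p => secondCountableTopology_of_separableSpace (H p)
  have hfπ : FactorsThrough f (MonoidHom.pi π) := fun x y hxy =>
    eq_of_forall_rat_Ioo fun r s hx =>
      (hsat (r, s)).subset ⟨x, hx, congrFun hxy (r, s)⟩
  exact exists_stronglySubmetrizable_factorization (continuous_pi hπ) hf hfπ

theorem of_factorization
    (h : ∀ f : G → ℝ, Continuous f →
      ∃ (H : Type) (gH : Group H) (tH : TopologicalSpace H),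
        letI := gH
        letI := tH
        IsTopologicalGroup H ∧ StronglySubmetrizable H ∧
          ∃ π : G →* H, Continuous π ∧ Surjective π ∧
            ∃ g : H → ℝ, Continuous g ∧ f = g ∘ π) :
    SimplySMFactorizable G := by
  rintro _ ⟨f, hf, rfl⟩
  obtain ⟨H, _, _, -, ⟨K, _, _, hK, hKsep, hKmet, i, hi, hi_bij⟩, π, hπ, hπ_surj, g, -, rfl⟩ :=
    h f hf
  have hfactors : FactorsThrough (g ∘ π) (i.comp π) := fun _ _ hxy =>
    congrArg g (hi_bij.injective hxy)
  exact ⟨K, _, _, hK, hKsep, hKmet, i.comp π, hi.comp hπ, hi_bij.surjective.comp hπ_surj,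
    preimage_image_preimage_of_factorsThrough hfactors _⟩

end SimplySMFactorizable

/-- A topological group is simply sm-factorizable iff every continuous real-valued function
factors through a continuous surjective homomorphism onto a strongly submetrizable
topological group. -/
theorem statement0 (G : Type*) [Group G] [TopologicalSpace G] [IsTopologicalGroup G] :
    SimplySMFactorizable G ↔
      ∀ f : G → ℝ, Continuous f →
        ∃ (H : Type) (gH : Group H) (tH : TopologicalSpace H),
          letI := gH
          letI := tH
          IsTopologicalGroup H ∧ StronglySubmetrizable H ∧
            ∃ π : G →* H, Continuous π ∧ Surjective π ∧
              ∃ g : H → ℝ, Continuous g ∧ f = g ∘ π :=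
  ⟨fun hG _ hf => hG.exists_factorization hf, SimplySMFactorizable.of_factorization⟩
end

section
/- Every weakly Lindelöf topological group G is simply sm-factorizable. -/
open Topology TopologicalSpace Pointwise Function Set

/-- A space is weakly Lindelöf if every open cover has a countable subfamily with dense union. -/
def WeaklyLindelof (X : Type*) [TopologicalSpace X] : Prop :=
  ∀ 𝒰 : Set (Set X), (∀ U ∈ 𝒰, IsOpen U) → ⋃₀ 𝒰 = Set.univ →
    ∃ 𝒱 ⊆ 𝒰, 𝒱.Countable ∧ Dense (⋃₀ 𝒱)

open Filter

universe u

/-!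
A weakly Lindelöf group is ω-narrow: if `V * V ⊆ U`, countably many translates `c • V` have
dense union, and then the translates `c • U` cover `G`. Weak Lindelöfness also controls a
continuous `f` uniformly on a dense set: for each `ε` there are countably many neighbourhoods `V`
of `1` such that right translation by `⋂ V` moves `f` by at most `ε` on a dense set, hence
everywhere. So `f` is invariant under right translation by the intersection of countably many
neighbourhoods of `1`.

In an ω-narrow group such a countable family extends to a countable group filter basis `B`
(closing it under halving, inverses, intersections and the countably many conjugates that
ω-narrowness requires). The group topology of `B` is first countable and, by ω-narrowness,
separable, so its Hausdorff quotient `H` is a separable metrizable group. The quotient map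
`G → H` is continuous and its fibres are left cosets of `⋂ B`, along which `f` is constant;
hence `f ≠ 0` is saturated.
-/

def OmegaNarrow (G : Type*) [Group G] [TopologicalSpace G] : Prop :=
  ∀ U ∈ 𝓝 (1 : G), ∃ C : Set G, C.Countable ∧ C * U = univ

theorem Set.Countable.exists_countable_closure₂ {α : Type*} {p : α → Prop} (F : α → α → Set α)
    (hF : ∀ a b, p a → p b → (F a b).Countable ∧ ∀ c ∈ F a b, p c) {s : Set α}
    (hs : s.Countable) (hsp : ∀ a ∈ s, p a) :
    ∃ t, s ⊆ t ∧ t.Countable ∧ (∀ a ∈ t, p a) ∧ ∀ a ∈ t, ∀ b ∈ t, F a b ⊆ t := by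
  let step : Set α → Set α := fun u ↦ u ∪ ⋃ a ∈ u, ⋃ b ∈ u, F a b
  let stage : ℕ → Set α := fun n ↦ step^[n] s
  have stage_succ (n : ℕ) : stage (n + 1) = step (stage n) := iterate_succ_apply' _ _ _
  have stage_mono : Monotone stage :=
    monotone_nat_of_le_succ fun n ↦ (stage_succ n).symm ▸ subset_union_left
  have stage_good (n : ℕ) : (stage n).Countable ∧ ∀ a ∈ stage n, p a := by
    induction n with
    | zero => exact ⟨hs, hsp⟩
    | succ n ih =>
      rw [stage_succ]
      refine ⟨ih.1.union (ih.1.biUnion fun a ha ↦ ih.1.biUnion fun b hb ↦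
        (hF a b (ih.2 a ha) (ih.2 b hb)).1), ?_⟩
      simp only [step, mem_union, mem_iUnion]
      rintro c (hc | ⟨a, ha, b, hb, hc⟩)
      exacts [ih.2 c hc, (hF a b (ih.2 a ha) (ih.2 b hb)).2 c hc]
  refine ⟨⋃ n, stage n, subset_iUnion stage 0, countable_iUnion fun n ↦ (stage_good n).1,
    fun a ha ↦ ?_, fun a ha b hb ↦ ?_⟩
  · obtain ⟨n, hn⟩ := mem_iUnion.1 ha
    exact (stage_good n).2 a hn
  · obtain ⟨m, hm⟩ := mem_iUnion.1 ha
    obtain ⟨n, hn⟩ := mem_iUnion.1 hb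
    have ha' : a ∈ stage (max m n) := stage_mono (le_max_left m n) hm
    have hb' : b ∈ stage (max m n) := stage_mono (le_max_right m n) hn
    intro c hc
    refine mem_iUnion_of_mem (max m n + 1) ?_
    rw [stage_succ]
    exact Or.inr (mem_biUnion ha' (mem_biUnion hb' hc))

section TopologicalGroup

variable {K : Type*} [Group K] [TopologicalSpace K] [IsTopologicalGroup K]

theorem IsTopologicalGroup.metrizableSpace_of_isCountablyGenerated [T0Space K]
    [(𝓝 (1 : K)).IsCountablyGenerated] : MetrizableSpace K := by
  let _ : UniformSpace K := IsTopologicalGroup.rightUniformSpace K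
  have : (uniformity K).IsCountablyGenerated := by
    rw [uniformity_eq_comap_nhds_one' K]
    infer_instance
  exact UniformSpace.metrizableSpace

theorem IsTopologicalGroup.separableSpace_of_omegaNarrow
    [(𝓝 (1 : K)).IsCountablyGenerated] (h : OmegaNarrow K) : SeparableSpace K := by
  obtain ⟨V, hV⟩ := (𝓝 (1 : K)).exists_antitone_basis
  choose C hC hCV using fun n ↦ h (V n)⁻¹ (inv_mem_nhds_one K (hV.mem n))
  refine ⟨⋃ n, C n, countable_iUnion hC, fun x ↦ ?_⟩
  refine mem_closure_iff_nhds.2 fun t ht ↦ ?_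
  have hxt : (x * ·) ⁻¹' t ∈ 𝓝 (1 : K) := (continuous_const_mul x).tendsto' 1 x (mul_one x) ht
  obtain ⟨n, -, hn⟩ := hV.1.mem_iff.1 hxt
  obtain ⟨c, hc, w, hw, rfl⟩ : x ∈ C n * (V n)⁻¹ := hCV n ▸ mem_univ x
  exact ⟨c, by simpa using hn hw, mem_iUnion_of_mem n hc⟩

end TopologicalGroup

theorem small_of_separableSpace_of_metrizableSpace (X : Type u) [TopologicalSpace X]
    [SeparableSpace X] [MetrizableSpace X] : Small.{0} X := by
  rcases isEmpty_or_nonempty X with hX | hX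
  · infer_instance
  let _ : MetricSpace X := TopologicalSpace.metrizableSpaceMetric X
  obtain ⟨u, hu⟩ := TopologicalSpace.exists_dense_seq X
  refine small_of_injective (f := fun x (n : ℕ) ↦ dist x (u n)) fun x y hxy ↦ ?_
  have := hu.equalizer (continuous_const.dist continuous_id)
    (continuous_const.dist continuous_id) hxy
  simpa using (congrFun this y).symm

theorem exists_continuousMulEquiv_type_zero (K : Type u) [Group K] [TopologicalSpace K]
    [IsTopologicalGroup K] [SeparableSpace K] [MetrizableSpace K] :
    ∃ (H : Type) (_ : Group H) (_ : TopologicalSpace H), IsTopologicalGroup H ∧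
      SeparableSpace H ∧ MetrizableSpace H ∧ Nonempty (K ≃ₜ* H) := by
  have := small_of_separableSpace_of_metrizableSpace K
  let e : K ≃ₜ Shrink.{0} K := Shrink.homeomorph K
  refine ⟨Shrink.{0} K, inferInstance, inferInstance,
    Topology.IsInducing.topologicalGroup (Shrink.mulEquiv (α := K)) e.symm.isInducing,
    e.surjective.denseRange.separableSpace e.continuous, e.symm.isEmbedding.metrizableSpace,
    ⟨{ Shrink.mulEquiv.symm with
      continuous_toFun := e.continuous
      continuous_invFun := e.symm.continuous }⟩⟩

/-- A copy of `G` carrying the group topology of `B` instead of the topology of `G`. -/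
def WithGroupFilterBasis {G : Type u} [Group G] (_B : GroupFilterBasis G) : Type u := G

namespace WithGroupFilterBasis

variable {G : Type u} [Group G] (B : GroupFilterBasis G)

instance : Group (WithGroupFilterBasis B) := inferInstanceAs (Group G)

instance : TopologicalSpace (WithGroupFilterBasis B) := B.topology

instance : IsTopologicalGroup (WithGroupFilterBasis B) := B.isTopologicalGroup

def equiv : G ≃* WithGroupFilterBasis B := MulEquiv.refl G

theorem nhds_one_hasBasis :
    (𝓝 (1 : WithGroupFilterBasis B)).HasBasis (· ∈ B) fun U ↦ equiv B '' U :=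
  B.nhds_one_hasBasis.congr (fun _ ↦ Iff.rfl) fun U _ ↦ (image_id U).symm

theorem isCountablyGenerated_nhds_one (hB : B.sets.Countable) :
    (𝓝 (1 : WithGroupFilterBasis B)).IsCountablyGenerated :=
  HasCountableBasis.isCountablyGenerated ⟨nhds_one_hasBasis B, hB⟩

theorem inv_mul_mem_of_inseparable {x y : G} (h : Inseparable (equiv B x) (equiv B y)) {U : Set G}
    (hU : U ∈ B) : x⁻¹ * y ∈ U := by
  have : (x * ·) '' U ∈ 𝓝 (equiv B x) := (B.nhds_hasBasis x).mem_of_mem hU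
  obtain ⟨u, hu, rfl⟩ := mem_of_mem_nhds (h.nhds_eq ▸ this)
  simpa using hu

variable [TopologicalSpace G]

theorem omegaNarrow (hB : ∀ U ∈ B, U ∈ 𝓝 (1 : G)) (h : OmegaNarrow G) :
    OmegaNarrow (WithGroupFilterBasis B) := by
  intro U hU
  obtain ⟨V, hV, hVU⟩ := (nhds_one_hasBasis B).mem_iff.1 hU
  obtain ⟨C, hC, hCV⟩ := h V (hB V hV)
  refine ⟨equiv B '' C, hC.image _,
    eq_univ_of_subset ?_ (image_univ_of_surjective (equiv B).surjective)⟩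
  rw [← hCV, image_mul]
  exact mul_subset_mul_left hVU

variable [IsTopologicalGroup G]

theorem continuous_equiv (hB : ∀ U ∈ B, U ∈ 𝓝 (1 : G)) : Continuous (equiv B) := by
  refine continuous_of_continuousAt_one (equiv B).toMonoidHom ?_
  rw [ContinuousAt, map_one, (nhds_one_hasBasis B).tendsto_right_iff]
  exact fun U hU ↦ Filter.mem_of_superset (hB U hU) fun x hx ↦ mem_image_of_mem _ hx

end WithGroupFilterBasis

section OmegaNarrow

variable {G : Type u} [Group G] [TopologicalSpace G] [IsTopologicalGroup G]

theorem OmegaNarrow.exists_countable_nhds_one_conj (hG : OmegaNarrow G) {U : Set G}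
    (hU : U ∈ 𝓝 (1 : G)) :
    ∃ 𝒲 : Set (Set G), 𝒲.Countable ∧ (∀ W ∈ 𝒲, W ∈ 𝓝 (1 : G)) ∧
      ∀ g : G, ∃ W ∈ 𝒲, ∀ n ∈ W, g * n * g⁻¹ ∈ U := by
  have hU' : (fun p : G × G ↦ p.1 * p.2 * p.1⁻¹) ⁻¹' U ∈ 𝓝 1 ×ˢ 𝓝 1 := by
    rw [← nhds_prod_eq]
    exact (by fun_prop : Continuous fun p : G × G ↦ p.1 * p.2 * p.1⁻¹).tendsto' (1, 1) 1
      (by simp) hU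
  obtain ⟨V, hV, M, hM, hVM⟩ := mem_prod_iff.1 hU'
  obtain ⟨C, hC, hCV⟩ := hG V⁻¹ (inv_mem_nhds_one G hV)
  have hconj (c : G) : (fun n ↦ c⁻¹ * n * c) ⁻¹' M ∈ 𝓝 (1 : G) :=
    (by fun_prop : Continuous fun n : G ↦ c⁻¹ * n * c).tendsto' 1 1 (by group) hM
  refine ⟨(fun c ↦ (fun n ↦ c⁻¹ * n * c) ⁻¹' M) '' C, hC.image _,
    forall_mem_image.2 fun c _ ↦ hconj c, fun g ↦ ?_⟩
  -- `g = w⁻¹ * c⁻¹` with `w⁻¹ ∈ V`, so `g * n * g⁻¹ = w⁻¹ * (c⁻¹ * n * c) * w`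
  obtain ⟨c, hc, w, hw, hcw⟩ : g⁻¹ ∈ C * V⁻¹ := hCV ▸ mem_univ _
  refine ⟨_, mem_image_of_mem _ hc, fun n hn ↦ ?_⟩
  have hg : g = w⁻¹ * c⁻¹ := by rw [← inv_inv g, ← hcw, mul_inv_rev]
  have := hVM (mk_mem_prod hw hn)
  simpa [hg, mul_assoc] using this

theorem OmegaNarrow.exists_countable_groupFilterBasis (hG : OmegaNarrow G) {𝒱 : Set (Set G)}
    (h𝒱 : 𝒱.Countable) (h𝒱1 : ∀ V ∈ 𝒱, V ∈ 𝓝 (1 : G)) :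
    ∃ B : GroupFilterBasis G, 𝒱 ⊆ B.sets ∧ B.sets.Countable ∧ ∀ U ∈ B, U ∈ 𝓝 (1 : G) := by
  choose! half hhalf1 hhalf using fun U (hU : U ∈ 𝓝 (1 : G)) ↦ exists_nhds_one_split hU
  choose! conj hconjc hconj1 hconj using
    fun U (hU : U ∈ 𝓝 (1 : G)) ↦ hG.exists_countable_nhds_one_conj hU
  obtain ⟨𝒞, h𝒱𝒞, h𝒞c, h𝒞1, h𝒞⟩ := (h𝒱.insert univ).exists_countable_closure₂
    (p := (· ∈ 𝓝 (1 : G))) (fun U V ↦ insert (U ∩ V) (insert U⁻¹ (insert (half U) (conj U))))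
    (fun U V hU hV ↦ ⟨((hconjc U hU).insert _).insert _ |>.insert _, by
      simp only [mem_insert_iff]
      rintro W (rfl | rfl | rfl | hW)
      exacts [inter_mem hU hV, inv_mem_nhds_one G hU, hhalf1 U hU, hconj1 U hU W hW]⟩)
    (forall_mem_insert.2 ⟨univ_mem, h𝒱1⟩)
  refine ⟨{ sets := 𝒞
            nonempty := ⟨univ, h𝒱𝒞 (mem_insert _ _)⟩
            inter_sets := fun {U V} hU hV ↦ ⟨U ∩ V, h𝒞 U hU V hV (mem_insert _ _), subset_rfl⟩
            one' := fun hU ↦ mem_of_mem_nhds (h𝒞1 _ hU)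
            mul' := fun {U} hU ↦ ⟨half U, h𝒞 U hU U hU (by simp),
              mul_subset_iff.2 (hhalf U (h𝒞1 U hU))⟩
            inv' := fun {U} hU ↦ ⟨U⁻¹, h𝒞 U hU U hU (by simp), subset_rfl⟩
            conj' := fun g U hU ↦
              let ⟨W, hW, hWU⟩ := hconj U (h𝒞1 U hU) g
              ⟨W, h𝒞 U hU U hU (by simp [hW]), hWU⟩ },
    (subset_insert _ _).trans h𝒱𝒞, h𝒞c, h𝒞1⟩

theorem OmegaNarrow.exists_separable_metrizable_quotient (hG : OmegaNarrow G)
    {B : GroupFilterBasis G} (hBc : B.sets.Countable) (hB : ∀ U ∈ B, U ∈ 𝓝 (1 : G)) :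
    ∃ (H : Type) (_ : Group H) (_ : TopologicalSpace H), IsTopologicalGroup H ∧
      SeparableSpace H ∧ MetrizableSpace H ∧ ∃ π : G →* H, Continuous π ∧ Surjective π ∧
        ∀ x y, π x = π y → ∀ U ∈ B, x⁻¹ * y ∈ U := by
  have := WithGroupFilterBasis.isCountablyGenerated_nhds_one B hBc
  have := IsTopologicalGroup.separableSpace_of_omegaNarrow
    (WithGroupFilterBasis.omegaNarrow B hB hG)
  have : SeparableSpace (SeparationQuotient (WithGroupFilterBasis B)) :=
    SeparationQuotient.surjective_mk.denseRange.separableSpace SeparationQuotient.continuous_mk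
  have : (𝓝 (1 : SeparationQuotient (WithGroupFilterBasis B))).IsCountablyGenerated := by
    rw [← SeparationQuotient.mk_one, ← SeparationQuotient.map_mk_nhds]
    infer_instance
  have : MetrizableSpace (SeparationQuotient (WithGroupFilterBasis B)) :=
    IsTopologicalGroup.metrizableSpace_of_isCountablyGenerated
  obtain ⟨H, _, _, hH, hHsep, hHmet, ⟨e⟩⟩ :=
    exists_continuousMulEquiv_type_zero (SeparationQuotient (WithGroupFilterBasis B))
  refine ⟨H, _, _, hH, hHsep, hHmet,
    (e : _ →* H).comp
      (SeparationQuotient.mkMonoidHom.comp (WithGroupFilterBasis.equiv B).toMonoidHom),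
    ?_, ?_, fun x y hxy U hU ↦ WithGroupFilterBasis.inv_mul_mem_of_inseparable B ?_ hU⟩
  · exact e.continuous.comp
      (SeparationQuotient.continuous_mk.comp (WithGroupFilterBasis.continuous_equiv B hB))
  · exact e.surjective.comp
      (SeparationQuotient.surjective_mk.comp (WithGroupFilterBasis.equiv B).surjective)
  · exact SeparationQuotient.mk_eq_mk.1 (e.injective hxy)

end OmegaNarrow

namespace WeaklyLindelof

variable {G : Type u} [Group G] [TopologicalSpace G] [IsTopologicalGroup G]

theorem exists_countable_dense_biUnion {X : Type*} [TopologicalSpace X] (hX : WeaklyLindelof X)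
    {ι : Type*} (U : ι → Set X) (hU : ∀ i, IsOpen (U i)) (hcover : ⋃ i, U i = univ) :
    ∃ I : Set ι, I.Countable ∧ Dense (⋃ i ∈ I, U i) := by
  obtain ⟨𝒱, h𝒱U, h𝒱c, h𝒱d⟩ := hX (range U) (forall_mem_range.2 hU) (sUnion_range U ▸ hcover)
  choose idx hidx using fun V : 𝒱 ↦ h𝒱U V.2
  have := h𝒱c.to_subtype
  refine ⟨range idx, countable_range idx, ?_⟩
  rwa [biUnion_range, iUnion_congr hidx, ← sUnion_eq_iUnion]

theorem omegaNarrow (hG : WeaklyLindelof G) : OmegaNarrow G := by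
  intro U hU
  obtain ⟨V, hVo, hV1, hVU⟩ := exists_open_nhds_one_mul_subset hU
  obtain ⟨C, hC, hCd⟩ := hG.exists_countable_dense_biUnion (· • V) (fun c ↦ hVo.smul c)
    (eq_univ_of_forall fun c ↦ mem_iUnion.2 ⟨c, 1, hV1, mul_one c⟩)
  refine ⟨C, hC, eq_univ_of_forall fun x ↦ ?_⟩
  -- `{y | y⁻¹ * x ∈ V}` is an open neighbourhood of `x`, so it meets the dense set `C • V`
  have hxo : IsOpen {y : G | y⁻¹ * x ∈ V} := hVo.preimage (by fun_prop)
  obtain ⟨y, hyx, hyC⟩ := hCd.inter_open_nonempty _ hxo ⟨x, by simpa using hV1⟩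
  obtain ⟨c, hc, v, hv, rfl⟩ : y ∈ C * V := by simpa using hyC
  exact ⟨c, hc, v * ((c * v)⁻¹ * x), hVU (mul_mem_mul hv hyx), by group⟩

theorem exists_countable_nhds_one_dist_mul_le (hG : WeaklyLindelof G) {Y : Type*}
    [PseudoMetricSpace Y] {f : G → Y} (hf : Continuous f) {ε : ℝ} (hε : 0 < ε) :
    ∃ 𝒱 : Set (Set G), 𝒱.Countable ∧ (∀ V ∈ 𝒱, V ∈ 𝓝 (1 : G)) ∧
      ∀ n ∈ ⋂₀ 𝒱, ∀ x, dist (f (x * n)) (f x) ≤ ε := by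
  have hloc (c : G) : ∃ W ∈ 𝓝 c, ∃ V ∈ 𝓝 (1 : G), ∀ x ∈ W, ∀ g ∈ V,
      dist (f (x * g)) (f x) < ε := by
    have hc : (fun p : G × G ↦ f (p.1 * p.2)) ⁻¹' Metric.ball (f c) (ε / 2) ∈ 𝓝 c ×ˢ 𝓝 1 := by
      rw [← nhds_prod_eq]
      exact (by fun_prop : Continuous fun p : G × G ↦ f (p.1 * p.2)).tendsto' (c, 1) (f c)
        (by simp) (Metric.ball_mem_nhds _ (half_pos hε))
    obtain ⟨W, hW, V, hV, hWV⟩ := mem_prod_iff.1 hc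
    refine ⟨W, hW, V, hV, fun x hx g hg ↦ ?_⟩
    have hxg : dist (f (x * g)) (f c) < ε / 2 := hWV (mk_mem_prod hx hg)
    have hx1 : dist (f x) (f c) < ε / 2 := by
      simpa using hWV (mk_mem_prod hx (mem_of_mem_nhds hV))
    linarith [dist_triangle_right (f (x * g)) (f x) (f c)]
  choose W hW V hV hWV using hloc
  obtain ⟨I, hI, hId⟩ := hG.exists_countable_dense_biUnion (fun c ↦ interior (W c))
    (fun _ ↦ isOpen_interior)
    (eq_univ_of_forall fun c ↦ mem_iUnion.2 ⟨c, mem_interior_iff_mem_nhds.2 (hW c)⟩)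
  refine ⟨V '' I, hI.image V, forall_mem_image.2 fun c _ ↦ hV c, fun n hn x ↦ ?_⟩
  have hclosed : IsClosed {x | dist (f (x * n)) (f x) ≤ ε} :=
    isClosed_le (by fun_prop) continuous_const
  refine hclosed.closure_subset_iff.2 ?_ (hId.closure_eq ▸ mem_univ x)
  simp only [subset_def, mem_iUnion₂]
  rintro y ⟨c, hc, hy⟩
  exact (hWV c y (interior_subset hy) n (hn _ (mem_image_of_mem V hc))).le

theorem exists_countable_nhds_one_mul_invariant (hG : WeaklyLindelof G) {Y : Type*}
    [MetricSpace Y] {f : G → Y} (hf : Continuous f) :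
    ∃ 𝒱 : Set (Set G), 𝒱.Countable ∧ (∀ V ∈ 𝒱, V ∈ 𝓝 (1 : G)) ∧
      ∀ n ∈ ⋂₀ 𝒱, ∀ x, f (x * n) = f x := by
  choose 𝒱 h𝒱c h𝒱1 h𝒱 using fun k : ℕ ↦
    hG.exists_countable_nhds_one_dist_mul_le hf (Nat.one_div_pos_of_nat (n := k))
  refine ⟨⋃ k, 𝒱 k, countable_iUnion h𝒱c, fun V hV ↦ ?_,
    fun n hn x ↦ eq_of_forall_dist_le fun ε hε ↦ ?_⟩
  · obtain ⟨k, hk⟩ := mem_iUnion.1 hV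
    exact h𝒱1 k V hk
  · obtain ⟨k, hk⟩ := exists_nat_one_div_lt hε
    exact (h𝒱 k n (fun V hV ↦ hn V (mem_iUnion_of_mem k hV)) x).trans hk.le

end WeaklyLindelof

/-- Every weakly Lindelöf topological group is simply sm-factorizable. -/
theorem statement2 (G : Type*) [Group G] [TopologicalSpace G] [IsTopologicalGroup G]
    (hWL : WeaklyLindelof G) : SimplySMFactorizable G := by
  rintro _ ⟨f, hf, rfl⟩
  obtain ⟨𝒱, h𝒱c, h𝒱1, hf𝒱⟩ := hWL.exists_countable_nhds_one_mul_invariant hf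
  obtain ⟨B, h𝒱B, hBc, hB1⟩ := hWL.omegaNarrow.exists_countable_groupFilterBasis h𝒱c h𝒱1
  obtain ⟨H, _, _, hH, hHsep, hHmet, π, hπ, hπs, hπB⟩ :=
    hWL.omegaNarrow.exists_separable_metrizable_quotient hBc hB1
  refine ⟨H, _, _, hH, hHsep, hHmet, π, hπ, hπs, ?_⟩
  refine Subset.antisymm ?_ (subset_preimage_image _ _)
  rintro y ⟨x, hx, hxy⟩
  have hfxy : f y = f x := by
    simpa using hf𝒱 (x⁻¹ * y) (fun V hV ↦ hπB x y hxy V (h𝒱B hV)) x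
  simpa [hfxy] using hx
end

section
/- A paratopological group G with topology τ is simply sm-factorizable if and only if its semiregularization G_sr (the same group endowed with the topology generated by the base {int_τ(cl_τ U) : U ∈ τ, U ≠ ∅}, which is again a paratopological group) is simply sm-factorizable. -/
open Topology TopologicalSpace Pointwise Function Set

/-- A paratopological group is simply sm-factorizable if every cozero set is saturated with
respect to some continuous surjective homomorphism onto a separable metrizable paratopological group. -/
def SimplySMFactorizablePara (G : Type*) [Group G] [TopologicalSpace G] : Prop :=
  ∀ U : Set G, IsCozero U →
    ∃ (H : Type) (gH : Group H) (tH : TopologicalSpace H),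
      letI := gH
      letI := tH
      ContinuousMul H ∧ SeparableSpace H ∧ MetrizableSpace H ∧
        ∃ π : G →* H, Continuous π ∧ Surjective π ∧ ⇑π ⁻¹' (⇑π '' U) = U

/-- The semiregularization of a topology: generated by interiors of closures of nonempty
open sets. -/
def semireg (X : Type*) (τ : TopologicalSpace X) : TopologicalSpace X :=
  TopologicalSpace.generateFrom
    {V | ∃ U : Set X, @IsOpen X τ U ∧ U.Nonempty ∧ V = @interior X τ (@closure X τ U)}

lemma tau_le_semireg {X : Type*} (τ : TopologicalSpace X) : τ ≤ semireg X τ := by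
  apply le_generateFrom
  rintro s ⟨U, hU, hne, rfl⟩
  exact isOpen_interior

lemma continuous_semireg {X Y : Type*} [τ : TopologicalSpace X] [tY : TopologicalSpace Y]
    [RegularSpace Y] {f : X → Y} (hf : Continuous f) :
    Continuous[semireg X τ, tY] f := by
  rw [continuous_def]
  intro V hV
  have key : f ⁻¹' V = ⋃₀ {B | (∃ U : Set X, IsOpen U ∧ U.Nonempty ∧
      B = interior (closure U)) ∧ B ⊆ f ⁻¹' V} := by
    apply Set.Subset.antisymm
    · intro x hx
      obtain ⟨t, ht, htc, hts⟩ := exists_mem_nhds_isClosed_subset (hV.mem_nhds hx)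
      have hxW : f x ∈ interior t := mem_interior_iff_mem_nhds.2 ht
      have hopen : IsOpen (f ⁻¹' interior t) := hf.isOpen_preimage _ isOpen_interior
      have hsub : interior (closure (f ⁻¹' interior t)) ⊆ f ⁻¹' V := by
        refine interior_subset.trans ?_
        refine (closure_minimal ?_ (htc.preimage hf)).trans (preimage_mono hts)
        exact preimage_mono interior_subset
      exact ⟨interior (closure (f ⁻¹' interior t)),
        ⟨⟨f ⁻¹' interior t, hopen, ⟨x, hxW⟩, rfl⟩, hsub⟩,
        interior_maximal subset_closure hopen hxW⟩
    · rintro x ⟨B, ⟨_, hBV⟩, hxB⟩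
      exact hBV hxB
  rw [key]
  exact @isOpen_sUnion X (semireg X τ) _ fun B hB =>
    TopologicalSpace.isOpen_generateFrom_of_mem hB.1

lemma isCozero_semireg_iff {G : Type*} [τ : TopologicalSpace G] (U : Set G) :
    @IsCozero G (semireg G τ) U ↔ IsCozero U := by
  constructor
  · rintro ⟨f, hf, rfl⟩
    exact ⟨f, continuous_le_dom (tau_le_semireg τ) hf, rfl⟩
  · rintro ⟨f, hf, rfl⟩
    exact ⟨f, continuous_semireg hf, rfl⟩

/-- A paratopological group is simply sm-factorizable iff its semiregularization is simply
sm-factorizable. -/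
theorem statement3 (G : Type*) [gG : Group G] [τ : TopologicalSpace G] [ContinuousMul G] :
    SimplySMFactorizablePara G ↔ @SimplySMFactorizablePara G gG (semireg G τ) := by
  constructor
  · intro h U hU
    obtain ⟨H, gH, tH, hcm, hsep, hmet, π, hπc, hπs, hπU⟩ :=
      h U ((isCozero_semireg_iff U).1 hU)
    refine ⟨H, gH, tH, hcm, hsep, hmet, π, ?_, hπs, hπU⟩
    letI := gH; letI := tH
    haveI : RegularSpace H := by
      letI : PseudoMetricSpace H := TopologicalSpace.pseudoMetrizableSpacePseudoMetric H
      infer_instance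
    exact continuous_semireg hπc
  · intro h U hU
    obtain ⟨H, gH, tH, hcm, hsep, hmet, π, hπc, hπs, hπU⟩ :=
      h U ((isCozero_semireg_iff U).2 hU)
    exact ⟨H, gH, tH, hcm, hsep, hmet, π, continuous_le_dom (tau_le_semireg τ) hπc, hπs, hπU⟩
end

section
/- A paratopological group G is simply sm-factorizable if and only if for each continuous function f : G → ℝ^ω there exist a strongly submetrizable paratopological group H, a continuous surjective homomorphism π : G → H, and a continuous function g : H → ℝ^ω such that f = g ∘ π. -/
open Topology TopologicalSpace Pointwise Function Set

/-- A paratopological group is strongly submetrizable if it admits a continuous bijective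
homomorphism onto a separable metrizable paratopological group. -/
def StronglySubmetrizablePara (H : Type*) [Group H] [TopologicalSpace H] : Prop :=
  ∃ (K : Type) (gK : Group K) (tK : TopologicalSpace K),
    letI := gK
    letI := tK
    ContinuousMul K ∧ SeparableSpace K ∧ MetrizableSpace K ∧
      ∃ i : H →* K, Continuous i ∧ Bijective i

/-- The preimage under a homomorphism of the image of a set is the union of right
translates by kernel elements; hence it is open when the set is open. -/
theorem aux_saturation_open {G K : Type*} [Group G] [Group K] [TopologicalSpace G]
    [ContinuousMul G] (p : G →* K) {U : Set G} (hU : IsOpen U) :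
    IsOpen (⇑p ⁻¹' (⇑p '' U)) := by
  have hset : ⇑p ⁻¹' (⇑p '' U) = ⋃ n : p.ker, (fun x => x * (n : G)⁻¹) ⁻¹' U := by
    ext x
    simp only [mem_preimage, mem_image, mem_iUnion]
    constructor
    · rintro ⟨u, hu, hpu⟩
      refine ⟨⟨u⁻¹ * x, ?_⟩, ?_⟩
      · simp [MonoidHom.mem_ker, hpu]
      · have : x * (u⁻¹ * x)⁻¹ = u := by group
        simpa [this] using hu
    · rintro ⟨⟨n, hn⟩, hx⟩
      refine ⟨x * n⁻¹, hx, ?_⟩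
      have h1 : p n = 1 := MonoidHom.mem_ker.mp hn
      simp [map_mul, map_inv, h1]
  rw [hset]
  exact isOpen_iUnion fun n => hU.preimage (continuous_mul_right _)

/-- The coinduced topology along a surjective homomorphism from a group with continuous
multiplication has continuous multiplication. -/
theorem aux_contMul_coinduced {G K : Type*} [Group G] [Group K] [tG : TopologicalSpace G]
    [ContinuousMul G] (p : G →* K) (hs : Surjective p) :
    @ContinuousMul K (tG.coinduced p) _ := by
  letI tK : TopologicalSpace K := tG.coinduced p
  have hpc : Continuous p := continuous_coinduced_rng
  have hop : IsOpenMap p := by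
    intro U hU
    rw [isOpen_coinduced]
    exact aux_saturation_open p hU
  have hqm : IsQuotientMap (Prod.map ⇑p ⇑p) :=
    (hop.prodMap hop).isQuotientMap (hpc.prodMap hpc) (hs.prodMap hs)
  refine ⟨?_⟩
  rw [hqm.continuous_iff]
  have heq : (fun q : K × K => q.1 * q.2) ∘ Prod.map ⇑p ⇑p
      = fun q : G × G => p (q.1 * q.2) := by
    funext q
    simp [Prod.map]
  rw [heq]
  exact hpc.comp continuous_mul

/-- A paratopological group is simply sm-factorizable iff every continuous map to ℝ^ω factors
through a continuous surjective homomorphism onto a strongly submetrizable paratopological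
group. -/
theorem statement6 (G : Type*) [Group G] [TopologicalSpace G] [ContinuousMul G] :
    SimplySMFactorizablePara G ↔
      ∀ f : G → (ℕ → ℝ), Continuous f →
        ∃ (H : Type) (gH : Group H) (tH : TopologicalSpace H),
          letI := gH
          letI := tH
          ContinuousMul H ∧ StronglySubmetrizablePara H ∧
            ∃ π : G →* H, Continuous π ∧ Surjective π ∧
              ∃ g : H → (ℕ → ℝ), Continuous g ∧ f = g ∘ π := by
  constructor
  · -- forward direction
    intro hG f hf
    -- the countable family of cozero sets determined by `f` and rational intervals
    set φ : ℕ × ℚ × ℚ → G → ℝ :=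
      fun i x => max 0 (min (f x i.1 - (i.2.1 : ℝ)) ((i.2.2 : ℝ) - f x i.1)) with hφdef
    have hφc : ∀ i, Continuous (φ i) := by
      intro i
      exact continuous_const.max
        ((((continuous_apply i.1).comp hf).sub continuous_const).min
          (continuous_const.sub ((continuous_apply i.1).comp hf)))
    have hmem : ∀ (i : ℕ × ℚ × ℚ) (x : G),
        φ i x ≠ 0 ↔ ((i.2.1 : ℝ) < f x i.1 ∧ f x i.1 < (i.2.2 : ℝ)) := by
      intro i x
      constructor
      · intro h
        have h0 : 0 < φ i x := (le_max_left 0 _).lt_of_ne (Ne.symm h)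
        rcases lt_max_iff.mp h0 with h' | h'
        · exact absurd h' (lt_irrefl 0)
        · exact ⟨sub_pos.mp (lt_min_iff.mp h').1, sub_pos.mp (lt_min_iff.mp h').2⟩
      · rintro ⟨h1, h2⟩
        have hm : 0 < min (f x i.1 - (i.2.1 : ℝ)) ((i.2.2 : ℝ) - f x i.1) :=
          lt_min_iff.mpr ⟨sub_pos.mpr h1, sub_pos.mpr h2⟩
        exact (lt_max_iff.mpr (Or.inr hm)).ne'
    have key : ∀ i : ℕ × ℚ × ℚ,
        ∃ (H : Type) (gH : Group H) (tH : TopologicalSpace H),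
          letI := gH
          letI := tH
          ContinuousMul H ∧ SeparableSpace H ∧ MetrizableSpace H ∧
            ∃ π : G →* H, Continuous π ∧ Surjective π ∧
              ⇑π ⁻¹' (⇑π '' (φ i ⁻¹' {x : ℝ | x ≠ 0})) = φ i ⁻¹' {x : ℝ | x ≠ 0} :=
      fun i => hG (φ i ⁻¹' {x : ℝ | x ≠ 0}) ⟨φ i, hφc i, rfl⟩
    choose H gH tH hmul hsep hmet π hπc hπs hsat using key
    letI : ∀ i, Group (H i) := gH
    letI : ∀ i, TopologicalSpace (H i) := tH
    haveI : ∀ i, ContinuousMul (H i) := hmul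
    haveI : ∀ i, SeparableSpace (H i) := hsep
    haveI : ∀ i, MetrizableSpace (H i) := hmet
    haveI hscH : ∀ i, SecondCountableTopology (H i) := by
      intro i
      letI : MetricSpace (H i) := TopologicalSpace.metrizableSpaceMetric (H i)
      exact UniformSpace.secondCountable_of_separable (H i)
    -- the diagonal homomorphism
    set P : G →* ∀ i, H i := Pi.monoidHom π with hPdef
    have hPc : Continuous ⇑P := continuous_pi fun i => hπc i
    set p : G →* ↥P.range := P.rangeRestrict with hpdef
    have hps : Surjective ⇑p := P.rangeRestrict_surjective
    -- fibers of `p` are contained in fibers of `f`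
    have hfib : ∀ x y : G, ⇑p x = ⇑p y → f x = f y := by
      intro x y hxy
      have hPxy : ∀ i, π i x = π i y := by
        intro i
        exact congrFun (congrArg Subtype.val hxy) i
      have hle : ∀ x y : G, (∀ i, π i x = π i y) → ∀ n, f y n ≤ f x n := by
        intro x y h n
        by_contra hlt
        push_neg at hlt
        obtain ⟨q, hq1, hq2⟩ := exists_rat_btwn hlt
        obtain ⟨b, hb⟩ := exists_rat_gt (f y n)
        set i : ℕ × ℚ × ℚ := (n, q, b) with hidef
        have hyU : y ∈ φ i ⁻¹' {x : ℝ | x ≠ 0} := by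
          simp only [mem_preimage, mem_setOf_eq]
          exact (hmem i y).mpr ⟨hq2, hb⟩
        have hxU : x ∈ ⇑(π i) ⁻¹' (⇑(π i) '' (φ i ⁻¹' {x : ℝ | x ≠ 0})) :=
          ⟨y, hyU, (h i).symm⟩
        rw [hsat i] at hxU
        have hlt2 := ((hmem i x).mp hxU).1
        exact absurd hq1 (not_lt.mpr hlt2.le)
      funext n
      exact le_antisymm (hle y x (fun i => (hPxy i).symm) n) (hle x y hPxy n)
    -- the factored map
    set g : ↥P.range → ℕ → ℝ := f ∘ surjInv hps with hgdef
    have hgp : ∀ x : G, g (p x) = f x := by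
      intro x
      exact hfib _ _ (surjInv_eq hps (p x))
    have hfeq : f = g ∘ ⇑p := by
      funext x
      exact (hgp x).symm
    refine ⟨↥P.range, inferInstance, TopologicalSpace.coinduced ⇑p ‹_›,
      aux_contMul_coinduced p hps, ?_, p, continuous_coinduced_rng, hps, g,
      continuous_coinduced_dom.mpr (hfeq ▸ hf), hfeq⟩
    -- strong submetrizability of the range with the quotient topology
    haveI hsc2 : SecondCountableTopology (∀ i, H i) := inferInstance
    haveI hcmK : ContinuousMul ↥P.range :=
      Topology.IsInducing.continuousMul
        ({ toFun := (↑), map_mul' := fun _ _ => rfl} : ↥P.range →ₙ* (∀ i, H i)) ⟨rfl⟩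
    haveI hscK : SecondCountableTopology ↥P.range :=
      secondCountableTopology_induced ↥P.range _ Subtype.val
    letI : ∀ i, MetricSpace (H i) := fun i => TopologicalSpace.metrizableSpaceMetric (H i)
    haveI ht3p : T3Space (∀ i, H i) := ⟨⟩
    haveI ht3 : T3Space ↥P.range := Topology.IsEmbedding.subtypeVal.t3Space
    haveI hmetK : MetrizableSpace ↥P.range :=
      TopologicalSpace.metrizableSpace_of_t3_secondCountable ↥P.range
    haveI hsepK : SeparableSpace ↥P.range := inferInstance
    refine ⟨↥P.range, inferInstance, instTopologicalSpaceSubtype, hcmK,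
      hsepK, hmetK, MonoidHom.id ↥P.range, ?_, Function.bijective_id⟩
    refine continuous_coinduced_dom.mpr ?_
    exact Continuous.subtype_mk hPc _
  · -- backward direction
    intro h U hU
    obtain ⟨u, huc, rfl⟩ := hU
    obtain ⟨H, gH, tH, hmulH, hssm, π, hπc, hπs, g, hgc, hfg⟩ :=
      h (fun x _ => u x) (continuous_pi fun _ => huc)
    obtain ⟨K, gK, tK, hmulK, hsepK, hmetK, i, hic, hib⟩ := hssm
    refine ⟨K, gK, tK, hmulK, hsepK, hmetK, i.comp π, ?_, ?_, ?_⟩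
    · rw [MonoidHom.coe_comp]
      exact hic.comp hπc
    · rw [MonoidHom.coe_comp]
      exact hib.2.comp hπs
    · ext x
      simp only [MonoidHom.coe_comp, comp_apply, mem_preimage, mem_image, mem_setOf_eq]
      constructor
      · rintro ⟨y, hy, hxy⟩
        have hππ : π y = π x := hib.1 hxy
        have huxy : u y = u x := by
          have h1 : u y = g (π y) 0 := congrFun (congrFun hfg y) 0
          have h2 : u x = g (π x) 0 := congrFun (congrFun hfg x) 0
          rw [h1, h2, hππ]
        have hy' : u y ≠ 0 := hy
        show u x ≠ 0
        rwa [huxy] at hy'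
      · intro hx
        exact ⟨x, hx, rfl⟩
end

section
/- Let G be a simply sm-factorizable topological group. If a subgroup H of G (with the subspace topology) is z-embedded in G, then H is simply sm-factorizable. -/
open Topology TopologicalSpace Pointwise Function Set

theorem Set.preimage_comp_image_preimage_eq {α β γ : Type*} (f : α → β) {g : β → γ} {V : Set β}
    (hV : g ⁻¹' (g '' V) = V) : (g ∘ f) ⁻¹' ((g ∘ f) '' (f ⁻¹' V)) = f ⁻¹' V := by
  refine (subset_preimage_image _ _).antisymm' ?_
  rw [preimage_comp, image_comp]
  calc f ⁻¹' (g ⁻¹' (g '' (f '' (f ⁻¹' V)))) ⊆ f ⁻¹' (g ⁻¹' (g '' V)) := by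
        gcongr; exact image_preimage_subset f V
    _ = f ⁻¹' V := by rw [hV]

theorem MonoidHom.preimage_image_rangeRestrict {G K : Type*} [Group G] [Group K] (f : G →* K)
    (s : Set G) : f.rangeRestrict ⁻¹' (f.rangeRestrict '' s) = f ⁻¹' (f '' s) := by
  ext x
  simp [Subtype.ext_iff]

theorem simplySMFactorizable_of_exists_saturating_hom (G : Type*) [Group G] [TopologicalSpace G]
    (h : ∀ U : Set G, IsCozero U →
      ∃ (K : Type) (_ : Group K) (_ : TopologicalSpace K), IsTopologicalGroup K ∧
        SeparableSpace K ∧ MetrizableSpace K ∧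
        ∃ π : G →* K, Continuous π ∧ ⇑π ⁻¹' (⇑π '' U) = U) :
    SimplySMFactorizable G := by
  intro U hU
  obtain ⟨K, _, _, _, _, _, π, hπ, hsat⟩ := h U hU
  refine ⟨π.range, inferInstance, inferInstance, inferInstance,
    (IsSeparable.of_separableSpace _).separableSpace, IsEmbedding.subtypeVal.metrizableSpace,
    π.rangeRestrict, hπ.subtype_mk _, π.rangeRestrict_surjective, ?_⟩
  rwa [MonoidHom.preimage_image_rangeRestrict]

theorem statement7_general (G : Type*) [Group G] [TopologicalSpace G]
    (hG : SimplySMFactorizable G) (H : Subgroup G)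
    (hz : ∀ U : Set H, IsCozero U →
      ∃ V : Set G, IsCozero V ∧ U = (Subtype.val : H → G) ⁻¹' V) :
    SimplySMFactorizable H := by
  refine simplySMFactorizable_of_exists_saturating_hom H fun U hU => ?_
  obtain ⟨V, hV, rfl⟩ := hz U hU
  obtain ⟨K, _, _, hK, hsep, hmet, π, hπ, -, hsat⟩ := hG V hV
  exact ⟨K, _, _, hK, hsep, hmet, π.comp H.subtype, hπ.comp continuous_subtype_val,
    Set.preimage_comp_image_preimage_eq Subtype.val hsat⟩

/-- A z-embedded subgroup of a simply sm-factorizable topological group is simply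
sm-factorizable. -/
theorem statement7 (G : Type*) [Group G] [TopologicalSpace G] [IsTopologicalGroup G]
    (hG : SimplySMFactorizable G) (H : Subgroup G)
    (hz : ∀ U : Set H, IsCozero U →
      ∃ V : Set G, IsCozero V ∧ U = (Subtype.val : H → G) ⁻¹' V) :
    SimplySMFactorizable H :=
  statement7_general G hG H hz
end

section
/- Let f : G → H be a continuous homomorphism of topological groups. If the identity of H is the intersection of countably many open sets, then the kernel of f is a normal admissible subgroup of G. -/
/-
The kernel is the preimage of `{1}` under `f`, and admissibility is pulled back along continuous
homomorphisms, so it suffices that `{1}` is admissible in `H`. Given open neighbourhoods `Vₙ` of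
`1` with `⋂ Vₙ = {1}`, build `U₀ = H` and recursively pick an open symmetric `Uₙ₊₁ ∋ 1` with
`Uₙ₊₁ Uₙ₊₁ ⊆ Uₙ ∩ Vₙ`; then `⋂ Uₙ ⊆ ⋂ Vₙ = {1}`.
-/

open Topology TopologicalSpace Pointwise Function Set

/-- A subset N of a topological group is an admissible subgroup if it is the intersection of a
sequence of open symmetric neighborhoods of the identity with Uₙ₊₁·Uₙ₊₁ ⊆ Uₙ. -/
def IsAdmissible {G : Type*} [Group G] [TopologicalSpace G] (N : Set G) : Prop :=
  ∃ U : ℕ → Set G,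
    (∀ n, IsOpen (U n) ∧ (1 : G) ∈ U n ∧ (U n)⁻¹ = U n) ∧
    (∀ n, U (n + 1) * U (n + 1) ⊆ U n) ∧ N = ⋂ n, U n

theorem IsAdmissible.preimage {G H : Type*} [Group G] [TopologicalSpace G] [Group H]
    [TopologicalSpace H] {f : G →* H} (hf : Continuous f) {N : Set H} (hN : IsAdmissible N) :
    IsAdmissible (f ⁻¹' N) := by
  obtain ⟨U, hU, hU_mul, rfl⟩ := hN
  refine ⟨fun n ↦ f ⁻¹' U n, fun n ↦ ⟨(hU n).1.preimage hf, by simpa using (hU n).2.1, ?_⟩,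
    fun n ↦ (preimage_mul_preimage_subset f).trans (preimage_mono (hU_mul n)), preimage_iInter⟩
  change (f ⁻¹' U n)⁻¹ = f ⁻¹' U n
  conv_rhs => rw [← (hU n).2.2]
  ext
  simp

namespace TopologicalSpace.OpenNhdsOf

variable {G : Type*} [Group G] [TopologicalSpace G] [IsTopologicalGroup G]

theorem exists_inv_eq_mul_subset (O : OpenNhdsOf (1 : G)) :
    ∃ S : OpenNhdsOf (1 : G), (S : Set G)⁻¹ = S ∧ (S : Set G) * S ⊆ O := by
  obtain ⟨S, hS_open, hS_one, hSS⟩ := exists_open_nhds_one_mul_subset (O.isOpen.mem_nhds O.mem)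
  refine ⟨⟨⟨S ∩ S⁻¹, hS_open.inter hS_open.inv⟩, hS_one, by simpa using hS_one⟩, ?_, ?_⟩
  · change (S ∩ S⁻¹)⁻¹ = S ∩ S⁻¹
    rw [inter_inv, inv_inv, inter_comm]
  · exact (mul_subset_mul inter_subset_left inter_subset_left).trans hSS

theorem exists_seq_inv_eq_mul_subset_inter (V : ℕ → OpenNhdsOf (1 : G)) :
    ∃ U : ℕ → OpenNhdsOf (1 : G), (∀ n, (U n : Set G)⁻¹ = U n) ∧
      ∀ n, (U (n + 1) : Set G) * U (n + 1) ⊆ U n ∩ V n := by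
  choose split split_inv split_mul using exists_inv_eq_mul_subset (G := G)
  refine ⟨fun n ↦ Nat.rec ⊤ (fun n Uₙ ↦ split (Uₙ ⊓ V n)) n, fun n ↦ ?_, fun n ↦ split_mul _⟩
  cases n with
  | zero => exact inv_univ
  | succ n => exact split_inv _

end TopologicalSpace.OpenNhdsOf

theorem IsGδ.isAdmissible_singleton_one {G : Type*} [Group G] [TopologicalSpace G]
    [IsTopologicalGroup G] (h : IsGδ ({1} : Set G)) : IsAdmissible ({1} : Set G) := by
  obtain ⟨V, hV_open, hV⟩ := isGδ_iff_eq_iInter_nat.1 h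
  have hV_one (n : ℕ) : (1 : G) ∈ V n := mem_iInter.1 (hV ▸ mem_singleton 1) n
  obtain ⟨U, hU_inv, hU_mul⟩ :=
    OpenNhdsOf.exists_seq_inv_eq_mul_subset_inter fun n ↦ ⟨⟨V n, hV_open n⟩, hV_one n⟩
  have hU_sub (n : ℕ) : (U (n + 1) : Set G) ⊆ V n :=
    (subset_mul_left _ (U (n + 1)).mem).trans ((hU_mul n).trans inter_subset_right)
  refine ⟨fun n ↦ U n, fun n ↦ ⟨(U n).isOpen, (U n).mem, hU_inv n⟩,
    fun n ↦ (hU_mul n).trans inter_subset_left, ?_⟩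
  refine (subset_iInter fun n ↦ singleton_subset_iff.2 (U n).mem).antisymm ?_
  exact hV ▸ subset_iInter fun n ↦ (iInter_subset _ (n + 1)).trans (hU_sub n)

theorem statement8_general {G H : Type*} [Group G] [TopologicalSpace G]
    [Group H] [TopologicalSpace H] [IsTopologicalGroup H]
    (f : G →* H) (hf : Continuous f)
    (hH : ∃ V : ℕ → Set H, (∀ n, IsOpen (V n)) ∧ ({(1 : H)} : Set H) = ⋂ n, V n) :
    f.ker.Normal ∧ IsAdmissible (f.ker : Set G) := by
  refine ⟨f.normal_ker, ?_⟩
  rw [f.coe_ker]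
  exact (isGδ_iff_eq_iInter_nat.2 hH).isAdmissible_singleton_one.preimage hf

/-- The kernel of a continuous homomorphism of topological groups whose codomain has
countable pseudocharacter at the identity is a normal admissible subgroup. -/
theorem statement8 {G H : Type*} [Group G] [TopologicalSpace G] [IsTopologicalGroup G]
    [Group H] [TopologicalSpace H] [IsTopologicalGroup H]
    (f : G →* H) (hf : Continuous f)
    (hH : ∃ V : ℕ → Set H, (∀ n, IsOpen (V n)) ∧ ({(1 : H)} : Set H) = ⋂ n, V n) :
    f.ker.Normal ∧ IsAdmissible (f.ker : Set G) :=
  statement8_general f hf hH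
end

section
/- Every neighborhood of the identity in an ω-balanced topological group G contains a normal admissible subgroup of G. -/
open Topology TopologicalSpace Pointwise Function Set

/-- A (para)topological group is ω-balanced if every neighborhood of the identity admits a
countable subordinated family of open neighborhoods of the identity. -/
def OmegaBalanced (G : Type*) [Group G] [TopologicalSpace G] : Prop :=
  ∀ U ∈ 𝓝 (1 : G), ∃ V : ℕ → Set G,
    (∀ n, IsOpen (V n) ∧ (1 : G) ∈ V n) ∧
      ∀ g : G, ∃ n, (fun x => g * x * g⁻¹) '' V n ⊆ U

/-!
Inside `U` pick a symmetric open neighbourhood and iterate ω-balancedness: every symmetric open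
neighbourhood `V` has countably many symmetric open children whose squares lie in `V` and such that
each conjugation maps one of them into `V`. The countable tree of neighbourhoods so obtained is
closed, up to inclusion, under square roots and conjugations, so its intersection is a normal
subgroup, and enumerating the tree yields the sequence witnessing admissibility.
-/

theorem exists_normal_subgroup_coe_eq_iInter {G ι : Type*} [Group G] {W : ι → Set G}
    (h1 : ∀ i, (1 : G) ∈ W i) (hinv : ∀ i, (W i)⁻¹ = W i)
    (hsqrt : ∀ i, ∃ j, W j * W j ⊆ W i)
    (hconj : ∀ i (g : G), ∃ j, (fun x => g * x * g⁻¹) '' W j ⊆ W i) :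
    ∃ N : Subgroup G, N.Normal ∧ (N : Set G) = ⋂ i, W i := by
  let N : Subgroup G :=
    { carrier := ⋂ i, W i
      one_mem' := mem_iInter.2 h1
      mul_mem' := fun {a b} ha hb => mem_iInter.2 fun i => by
        obtain ⟨j, hj⟩ := hsqrt i
        exact hj (mul_mem_mul (mem_iInter.1 ha j) (mem_iInter.1 hb j))
      inv_mem' := fun {a} ha => mem_iInter.2 fun i => by
        rw [← hinv i]
        exact inv_mem_inv.2 (mem_iInter.1 ha i) }
  refine ⟨N, ⟨fun a ha g => mem_iInter.2 fun i => ?_⟩, rfl⟩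
  obtain ⟨j, hj⟩ := hconj i g
  exact hj (mem_image_of_mem _ (mem_iInter.1 ha j))

def IsSymmOpenNhdOne {G : Type*} [Group G] [TopologicalSpace G] (V : Set G) : Prop :=
  IsOpen V ∧ (1 : G) ∈ V ∧ V⁻¹ = V

section SymmOpenNhdOne

variable {G : Type*} [Group G] [TopologicalSpace G]

theorem IsSymmOpenNhdOne.mem_nhds {V : Set G} (hV : IsSymmOpenNhdOne V) : V ∈ 𝓝 (1 : G) :=
  hV.1.mem_nhds hV.2.1

theorem isSymmOpenNhdOne_inter_inv [ContinuousInv G] {V : Set G} (hV : IsOpen V)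
    (h1 : (1 : G) ∈ V) : IsSymmOpenNhdOne (V ∩ V⁻¹) :=
  ⟨hV.inter hV.inv, ⟨h1, by simpa using h1⟩, by rw [inter_inv, inv_inv, inter_comm]⟩

theorem isSymmOpenNhdOne_biInter_finset {ι : Type*} {s : Finset ι} {W : ι → Set G}
    (hW : ∀ i, IsSymmOpenNhdOne (W i)) : IsSymmOpenNhdOne (⋂ i ∈ s, W i) :=
  ⟨isOpen_biInter_finset fun i _ => (hW i).1, mem_iInter₂.2 fun i _ => (hW i).2.1,
    by simp only [iInter_inv, (hW _).2.2]⟩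

theorem isAdmissible_iInter {ι : Type*} [Countable ι] [Nonempty ι] {W : ι → Set G}
    (hW : ∀ i, IsSymmOpenNhdOne (W i)) (hsqrt : ∀ i, ∃ j, W j * W j ⊆ W i) :
    IsAdmissible (⋂ i, W i) := by
  classical
  choose r hr using hsqrt
  obtain ⟨e, he⟩ := exists_surjective_nat ι
  -- `S (n + 1)` holds square roots of the members of `S n` and the `n`-th member of the family,
  -- so every member eventually enters.
  let S : ℕ → Finset ι := fun n => Nat.rec ∅ (fun m s => s.image r ∪ {e m}) n
  have hS_succ (n : ℕ) : S (n + 1) = (S n).image r ∪ {e n} := rfl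
  have hr_mem {n : ℕ} {i : ι} (hi : i ∈ S n) : r i ∈ S (n + 1) := by
    rw [hS_succ]
    exact Finset.mem_union_left _ (Finset.mem_image_of_mem r hi)
  refine ⟨fun n => ⋂ i ∈ S n, W i, fun n => isSymmOpenNhdOne_biInter_finset hW, ?_, ?_⟩
  · rintro n _ ⟨a, ha, b, hb, rfl⟩
    refine mem_iInter₂.2 fun i hi => hr i (mul_mem_mul ?_ ?_)
    · exact mem_iInter₂.1 ha (r i) (hr_mem hi)
    · exact mem_iInter₂.1 hb (r i) (hr_mem hi)
  · refine Subset.antisymm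
      (subset_iInter fun n => subset_iInter₂ fun i _ => iInter_subset W i)
      (fun x hx => mem_iInter.2 fun i => ?_)
    obtain ⟨m, rfl⟩ := he i
    exact mem_iInter₂.1 (mem_iInter.1 hx (m + 1)) (e m) (by simp [hS_succ])

end SymmOpenNhdOne

section OmegaBalanced

variable {G : Type*} [Group G] [TopologicalSpace G]

theorem OmegaBalanced.exists_sqrt_conj_family [ContinuousMul G] [ContinuousInv G]
    (hb : OmegaBalanced G) {U : Set G} (hU : U ∈ 𝓝 (1 : G)) :
    ∃ c : ℕ → Set G, (∀ n, IsSymmOpenNhdOne (c n)) ∧ (∀ n, c n * c n ⊆ U) ∧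
      ∀ g : G, ∃ n, (fun x => g * x * g⁻¹) '' c n ⊆ U := by
  obtain ⟨V, hV, hVU⟩ := hb U hU
  obtain ⟨W, hWo, hW1, hWW⟩ := exists_open_nhds_one_mul_subset hU
  have hsub (n : ℕ) : (W ∩ V n) ∩ (W ∩ V n)⁻¹ ⊆ W ∩ V n := inter_subset_left
  refine ⟨fun n => (W ∩ V n) ∩ (W ∩ V n)⁻¹,
    fun n => isSymmOpenNhdOne_inter_inv (hWo.inter (hV n).1) ⟨hW1, (hV n).2⟩,
    fun n => ((mul_subset_mul (hsub n) (hsub n)).trans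
      (mul_subset_mul inter_subset_left inter_subset_left)).trans hWW, fun g => ?_⟩
  obtain ⟨n, hn⟩ := hVU g
  exact ⟨n, (image_mono ((hsub n).trans inter_subset_right)).trans hn⟩

theorem OmegaBalanced.exists_sqrt_conj_closed_family [ContinuousMul G] [ContinuousInv G]
    (hb : OmegaBalanced G) {U : Set G} (hU : U ∈ 𝓝 (1 : G)) :
    ∃ W : List ℕ → Set G, (∀ l, IsSymmOpenNhdOne (W l)) ∧ (∀ l, ∃ l', W l' * W l' ⊆ W l) ∧
      (∀ l (g : G), ∃ l', (fun x => g * x * g⁻¹) '' W l' ⊆ W l) ∧ W [] ⊆ U := by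
  obtain ⟨V, hVU, hVo, hV1⟩ := mem_nhds_iff.1 hU
  choose c hc using fun V : {V : Set G // IsSymmOpenNhdOne V} =>
    hb.exists_sqrt_conj_family V.2.mem_nhds
  let root : {V : Set G // IsSymmOpenNhdOne V} := ⟨V ∩ V⁻¹, isSymmOpenNhdOne_inter_inv hVo hV1⟩
  -- The member at `n :: l` is the `n`-th child of the member at `l`.
  let T : List ℕ → {V : Set G // IsSymmOpenNhdOne V} :=
    fun l => l.foldr (fun n V => ⟨c V n, (hc V).1 n⟩) root
  refine ⟨fun l => T l, fun l => (T l).2, fun l => ⟨0 :: l, (hc (T l)).2.1 0⟩,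
    fun l g => ?_, inter_subset_left.trans hVU⟩
  obtain ⟨n, hn⟩ := (hc (T l)).2.2 g
  exact ⟨n :: l, hn⟩

end OmegaBalanced

/-- Every neighborhood of the identity in an ω-balanced topological group contains a normal
admissible subgroup. -/
theorem statement12 (G : Type*) [Group G] [TopologicalSpace G] [IsTopologicalGroup G]
    (hb : OmegaBalanced G) :
    ∀ U ∈ 𝓝 (1 : G), ∃ N : Subgroup G, N.Normal ∧ IsAdmissible (N : Set G) ∧
      (N : Set G) ⊆ U := by
  intro U hU
  obtain ⟨W, hW, hsqrt, hconj, hWU⟩ := hb.exists_sqrt_conj_closed_family hU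
  obtain ⟨N, hN, hNW⟩ :=
    exists_normal_subgroup_coe_eq_iInter (fun l => (hW l).2.1) (fun l => (hW l).2.2) hsqrt hconj
  refine ⟨N, hN, hNW ▸ isAdmissible_iInter hW hsqrt, ?_⟩
  rw [hNW]
  exact (iInter_subset W []).trans hWU
end

section
/- Let {G_α : α ∈ A} be a family of strongly submetrizable paratopological groups. Then the product G = Π_{α∈A} G_α, with the product topology and coordinatewise operations, satisfies Hs(G) ≤ ω, i.e., for each neighborhood U of the identity e in G there is a countable family {Uₙ : n ∈ ω} of open neighborhoods of e such that ⋂ₙ Uₙ·Uₙ⁻¹ ⊆ U. -/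
open Topology TopologicalSpace Pointwise Function Set

/-- Countable Hausdorff number: Hs(G) ≤ ω. -/
def HsCountable (G : Type*) [Group G] [TopologicalSpace G] : Prop :=
  ∀ U ∈ 𝓝 (1 : G), ∃ V : ℕ → Set G,
    (∀ n, IsOpen (V n) ∧ (1 : G) ∈ V n) ∧ (⋂ n, V n * (V n)⁻¹) ⊆ U

lemma key_lemma {H : Type*} [Group H] [TopologicalSpace H]
    (h : StronglySubmetrizablePara H) :
    ∃ V : ℕ → Set H, (∀ n, IsOpen (V n) ∧ (1 : H) ∈ V n) ∧
      (⋂ n, V n * (V n)⁻¹) ⊆ {1} := by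
  obtain ⟨K, gK, tK, hmul, _hsep, hmet, i, hic, hib⟩ := h
  letI := gK
  letI := tK
  haveI : ContinuousMul K := hmul
  haveI : MetrizableSpace K := hmet
  letI : MetricSpace K := TopologicalSpace.metrizableSpaceMetric K
  haveI : T2Space K := inferInstance
  obtain ⟨B, hB⟩ := (𝓝 (1 : K)).exists_antitone_basis
  refine ⟨fun n => i ⁻¹' interior (B n), fun n =>
    ⟨isOpen_interior.preimage hic, ?_⟩, ?_⟩
  · show i 1 ∈ interior (B n)
    rw [map_one]
    exact mem_interior_iff_mem_nhds.2 (hB.mem n)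
  · intro x hx
    rw [mem_iInter] at hx
    have hy : ∀ n, ∃ a ∈ B n, ∃ b ∈ B n, a * b⁻¹ = i x := by
      intro n
      obtain ⟨a, ha, b, hb, hab⟩ := hx n
      refine ⟨i a, interior_subset ha, (i b)⁻¹, ?_, ?_⟩
      · have : b⁻¹ ∈ i ⁻¹' interior (B n) := hb
        have : i b⁻¹ ∈ interior (B n) := this
        rw [map_inv] at this
        simpa using interior_subset this
      · rw [inv_inv, ← map_mul]
        exact congrArg i hab
    choose a ha b hb hab using hy
    have h1 : Filter.Tendsto a Filter.atTop (𝓝 (1 : K)) := hB.tendsto ha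
    have h2 : Filter.Tendsto b Filter.atTop (𝓝 (1 : K)) := hB.tendsto hb
    have h3 : Filter.Tendsto (fun n => i x * b n) Filter.atTop (𝓝 (i x * 1)) :=
      h2.const_mul _
    have h4 : Filter.Tendsto (fun n => i x * b n) Filter.atTop (𝓝 (1 : K)) := by
      have : (fun n => i x * b n) = a := by
        funext n
        rw [← hab n]
        group
      rw [this]
      exact h1
    have hix : i x = 1 := by
      have := tendsto_nhds_unique h3 h4
      rwa [mul_one] at this
    have : x = 1 := hib.1 (by rw [hix, map_one])
    simp [this]

/-- The product of a family of strongly submetrizable paratopological groups has countable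
Hausdorff number. -/
theorem statement17 {ι : Type*} (G : ι → Type*) [∀ α, Group (G α)]
    [∀ α, TopologicalSpace (G α)] [∀ α, ContinuousMul (G α)]
    (h : ∀ α, StronglySubmetrizablePara (G α)) :
    HsCountable (∀ α, G α) := by
  intro U hU
  rw [nhds_pi, Filter.mem_pi] at hU
  obtain ⟨I, hIfin, t, ht, hsub⟩ := hU
  by_cases hIe : I.Nonempty
  · obtain ⟨f, hf⟩ := hIfin.countable.exists_eq_range hIe
    choose V hV hVsub using fun α => key_lemma (h α)
    refine ⟨fun n => {x | x (f n.unpair.1) ∈ V (f n.unpair.1) n.unpair.2}, ?_, ?_⟩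
    · intro n
      exact ⟨(hV _ _).1.preimage (continuous_apply _), (hV _ _).2⟩
    · intro x hx
      apply hsub
      rw [Set.mem_pi]
      intro α hα
      rw [hf] at hα
      obtain ⟨k, rfl⟩ := hα
      have h1 : x (f k) ∈ ({1} : Set (G (f k))) := by
        apply hVsub (f k)
        rw [mem_iInter]
        intro m
        have hx' : x ∈ {y : ∀ α, G α | y (f k) ∈ V (f k) m} *
            {y : ∀ α, G α | y (f k) ∈ V (f k) m}⁻¹ := by
          have hh := (mem_iInter.1 hx) (Nat.pair k m)
          simp only [] at hh
          rw [Nat.unpair_pair] at hh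
          exact hh
        obtain ⟨p, hp, q, hq, hpq⟩ := hx'
        refine ⟨p (f k), hp, q (f k), ?_, ?_⟩
        · have : q⁻¹ ∈ {x | x (f k) ∈ V (f k) m} := hq
          exact Set.mem_inv.2 (by simpa using this)
        · exact congrFun hpq (f k)
      rw [mem_singleton_iff] at h1
      rw [h1]
      exact mem_of_mem_nhds (ht _)
  · refine ⟨fun _ => Set.univ, fun n => ⟨isOpen_univ, mem_univ _⟩, fun x _ => hsub ?_⟩
    rw [Set.not_nonempty_iff_eq_empty.1 hIe]
    simp
end
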